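/- Let (f,g) ∈ 𝒞₄(I), let h := ∫(W^{2,1}_{f,g})^{1/3} (an antiderivative of the real cube root of W^{2,1}_{f,g}), and let Z := (1/(h'∘h⁻¹))·(Y∘h⁻¹) for Y ∈ {f', g'}. If the expression (3W^{4,1}_{f,g} + 12W^{3,2}_{f,g})/(W^{2,1}_{f,g})^{5/3} − 5(W^{3,1}_{f,g})²/(W^{2,1}_{f,g})^{8/3} is constant on I, then there exists p ∈ ℝ such that Z'' = pZ on h(I). -/

import Mathlib

/-!
Both `Y = f'` and `Y = g'` solve `W^{2,1} Y'' = W^{3,1} Y' - W^{3,2} Y`, since the determinant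
with rows `(Y'', Y', Y)`, `(f''', f'', f')`, `(g''', g'', g')` has a repeated row. Put
`u = h' = (W^{2,1})^{1/3}`; for `Z = (Y / u) ∘ h⁻¹` the chain rule through `h⁻¹` gives
`Z'' ∘ h = ((Y'' u - Y u'') u - 3 u' (Y' u - Y u')) / u⁵`. Substituting the equation for `Y''`,
the `Y'` terms cancel because `3 u² u' = W^{3,1}`, and
`u'' = (W^{4,1} + W^{3,2} - 6 u u'²) / (3 u²)` turns the remaining coefficient of `Y / u` into
`-1/9` times the constant expression; so `p = -K/9`.
-/

/-- The real cube root of a real number. -/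
noncomputable def cbrt (x : ℝ) : ℝ :=
  if 0 ≤ x then x ^ ((1 : ℝ) / 3) else -((-x) ^ ((1 : ℝ) / 3))

/-- The generalized Wronski-type determinant `W^{i,j}_{f,g}`. -/
noncomputable def Wdet (f g : ℝ → ℝ) (i j : ℕ) (x : ℝ) : ℝ :=
  iteratedDeriv i f x * iteratedDeriv j g x - iteratedDeriv j f x * iteratedDeriv i g x

open Filter Topology Set Function

lemma cbrt_pow_three (x : ℝ) : cbrt x ^ 3 = x := by
  unfold cbrt
  split_ifs with hx
  · rw [← Real.rpow_natCast, ← Real.rpow_mul hx]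
    norm_num
  · rw [Odd.neg_pow (by decide), ← Real.rpow_natCast, ← Real.rpow_mul (by linarith)]
    norm_num

lemma cbrt_ne_zero {x : ℝ} (hx : x ≠ 0) : cbrt x ≠ 0 := by
  intro hc
  apply hx
  rw [← cbrt_pow_three x, hc, zero_pow three_ne_zero]

lemma cbrt_neg (x : ℝ) : cbrt (-x) = -cbrt x := by
  unfold cbrt
  rcases lt_trichotomy x 0 with hx | rfl | hx
  · simp [hx.le, not_le.2 hx]
  · simp
  · simp [hx.le, not_le.2 (neg_neg_of_pos hx)]

lemma hasDerivAt_cbrt_of_pos {x : ℝ} (hx : 0 < x) :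
    HasDerivAt cbrt (1 / (3 * cbrt x ^ 2)) x := by
  have hcx : cbrt x = x ^ ((1 : ℝ) / 3) := if_pos hx.le
  have hrpow := Real.hasDerivAt_rpow_const (p := (1 : ℝ) / 3) (Or.inl hx.ne')
  rw [Real.rpow_sub_one hx.ne', ← hcx] at hrpow
  have hc0 : cbrt x ≠ 0 := cbrt_ne_zero hx.ne'
  refine (hrpow.congr_deriv ?_).congr_of_eventuallyEq ?_
  · nth_rewrite 2 [← cbrt_pow_three x]
    field_simp
  · filter_upwards [eventually_gt_nhds hx] with y hy using if_pos hy.le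

lemma hasDerivAt_cbrt {x : ℝ} (hx : x ≠ 0) : HasDerivAt cbrt (1 / (3 * cbrt x ^ 2)) x := by
  rcases hx.lt_or_gt with hneg | hpos
  · have hreflect : (fun y => -cbrt (-y)) = cbrt := funext fun y => by rw [cbrt_neg, neg_neg]
    have hdiff : HasDerivAt (fun y => -cbrt (-y)) (1 / (3 * cbrt x ^ 2)) x :=
      ((hasDerivAt_cbrt_of_pos (neg_pos.2 hneg)).comp x (hasDerivAt_neg x)).neg.congr_deriv
        (by rw [cbrt_neg]; ring)
    rwa [hreflect] at hdiff
  · exact hasDerivAt_cbrt_of_pos hpos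

theorem HasDerivAt.cbrt {w : ℝ → ℝ} {w' x : ℝ} (hw : HasDerivAt w w' x) (hx : w x ≠ 0) :
    HasDerivAt (fun y => cbrt (w y)) (w' / (3 * cbrt (w x) ^ 2)) x :=
  ((hasDerivAt_cbrt hx).comp x hw).congr_deriv (by ring)

theorem ContDiffOn.hasDerivAt_iteratedDeriv {f : ℝ → ℝ} {s : Set ℝ} {n k : ℕ} {x : ℝ}
    (hf : ContDiffOn ℝ n f s) (hs : IsOpen s) (hk : k < n) (hx : x ∈ s) :
    HasDerivAt (iteratedDeriv k f) (iteratedDeriv (k + 1) f x) x := by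
  have hd : DifferentiableOn ℝ (iteratedDeriv k f) s :=
    (hf.differentiableOn_iteratedDerivWithin (by exact_mod_cast hk) hs.uniqueDiffOn).congr
      (iteratedDerivWithin_of_isOpen hs).symm
  rw [iteratedDeriv_succ]
  exact (hd.differentiableAt (hs.mem_nhds hx)).hasDerivAt

theorem ContDiffOn.hasDerivAt_deriv {f : ℝ → ℝ} {s : Set ℝ} {n : ℕ} {x : ℝ}
    (hf : ContDiffOn ℝ n f s) (hs : IsOpen s) (hn : 1 < n) (hx : x ∈ s) :
    HasDerivAt (deriv f) (iteratedDeriv 2 f x) x := by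
  simpa only [iteratedDeriv_one] using hf.hasDerivAt_iteratedDeriv hs hn hx

section InverseFunction

variable {I : Set ℝ} {h u : ℝ → ℝ}

lemma injOn_of_hasDerivAt_ne_zero (hIc : I.OrdConnected) (hh : ∀ x ∈ I, HasDerivAt h (u x) x)
    (hu0 : ∀ x ∈ I, u x ≠ 0) : InjOn h I := by
  intro a ha b hb hab
  by_contra hne
  wlog hlt : a < b generalizing a b
  · exact this hb ha hab.symm (Ne.symm hne) (lt_of_le_of_ne (not_lt.1 hlt) (Ne.symm hne))
  have hsub : Icc a b ⊆ I := hIc.out ha hb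
  obtain ⟨c, hc, hc0⟩ := exists_hasDerivAt_eq_zero hlt
    (fun x hx => (hh x (hsub hx)).continuousAt.continuousWithinAt) hab
    (fun x hx => hh x (hsub (Ioo_subset_Icc_self hx)))
  exact hu0 c (hsub (Ioo_subset_Icc_self hc)) hc0

lemma hasStrictDerivAt_of_continuousOn (hI : IsOpen I) (hh : ∀ x ∈ I, HasDerivAt h (u x) x)
    (hu : ContinuousOn u I) {x : ℝ} (hx : x ∈ I) : HasStrictDerivAt h (u x) x :=
  hasStrictDerivAt_of_hasDerivAt_of_continuousAt (eventually_of_mem (hI.mem_nhds hx) hh)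
    (hu.continuousAt (hI.mem_nhds hx))

lemma invFunOn_eventuallyEq_localInverse (hI : IsOpen I) (hinj : InjOn h I) {x h' : ℝ}
    (hx : x ∈ I) (hs : HasStrictDerivAt h h' x) (h'0 : h' ≠ 0) :
    invFunOn h I =ᶠ[𝓝 (h x)] hs.localInverse h h' x h'0 := by
  have hψx : hs.localInverse h h' x h'0 (h x) = x :=
    (hs.eventually_left_inverse h'0).self_of_nhds
  have hψI : ∀ᶠ t in 𝓝 (h x), hs.localInverse h h' x h'0 t ∈ I :=
    (hs.to_localInverse h'0).hasDerivAt.continuousAt.eventually_mem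
      (by rw [hψx]; exact hI.mem_nhds hx)
  filter_upwards [hψI, hs.eventually_right_inverse h'0] with t htI ht
  conv_lhs => rw [← ht]
  exact hinj.leftInvOn_invFunOn htI

lemma image_mem_nhds_of_hasDerivAt_ne_zero (hI : IsOpen I) (hh : ∀ x ∈ I, HasDerivAt h (u x) x)
    (hu : ContinuousOn u I) (hu0 : ∀ x ∈ I, u x ≠ 0) {x : ℝ} (hx : x ∈ I) :
    h '' I ∈ 𝓝 (h x) := by
  rw [← (hasStrictDerivAt_of_continuousOn hI hh hu hx).map_nhds_eq (hu0 x hx)]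
  exact image_mem_map (hI.mem_nhds hx)

theorem hasDerivAt_of_eqOn_comp (hI : IsOpen I) (hIc : I.OrdConnected)
    (hh : ∀ x ∈ I, HasDerivAt h (u x) x) (hu : ContinuousOn u I) (hu0 : ∀ x ∈ I, u x ≠ 0)
    {Z F F' : ℝ → ℝ} (hZ : EqOn (Z ∘ h) F I) (hF : ∀ x ∈ I, HasDerivAt F (F' x) x)
    {x : ℝ} (hx : x ∈ I) : HasDerivAt Z (F' x / u x) (h x) := by
  have hinj := injOn_of_hasDerivAt_ne_zero hIc hh hu0
  have hs := hasStrictDerivAt_of_continuousOn hI hh hu hx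
  have hinv : HasDerivAt (invFunOn h I) (u x)⁻¹ (h x) :=
    (hs.to_localInverse (hu0 x hx)).hasDerivAt.congr_of_eventuallyEq
      (invFunOn_eventuallyEq_localInverse hI hinj hx hs (hu0 x hx))
  have hFx : HasDerivAt F (F' x) (invFunOn h I (h x)) := by
    rw [hinj.leftInvOn_invFunOn hx]
    exact hF x hx
  refine (hFx.comp (h x) hinv).congr_of_eventuallyEq ?_
  filter_upwards [image_mem_nhds_of_hasDerivAt_ne_zero hI hh hu hu0 hx]
    with t ⟨y, hy, hyt⟩
  subst hyt
  rw [comp_apply, hinj.leftInvOn_invFunOn hy]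
  exact hZ hy

end InverseFunction

/-- The paper's `Z = (1 / (h' ∘ h⁻¹)) · (Y ∘ h⁻¹)`, with `invFunOn h I` as `h⁻¹`. -/
noncomputable def liouvilleTransform (h : ℝ → ℝ) (I : Set ℝ) (Y : ℝ → ℝ) (t : ℝ) : ℝ :=
  1 / deriv h (invFunOn h I t) * Y (invFunOn h I t)

section LiouvilleTransform

variable {I : Set ℝ} {h u u₁ u₂ Y Y₁ Y₂ : ℝ → ℝ}

lemma liouvilleTransform_apply (hIc : I.OrdConnected) (hh : ∀ x ∈ I, HasDerivAt h (u x) x)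
    (hu0 : ∀ x ∈ I, u x ≠ 0) {x : ℝ} (hx : x ∈ I) :
    liouvilleTransform h I Y (h x) = Y x / u x := by
  rw [liouvilleTransform, (injOn_of_hasDerivAt_ne_zero hIc hh hu0).leftInvOn_invFunOn hx,
    (hh x hx).deriv, one_div_mul_eq_div]

theorem deriv_deriv_liouvilleTransform (hI : IsOpen I) (hIc : I.OrdConnected)
    (hh : ∀ x ∈ I, HasDerivAt h (u x) x) (hu0 : ∀ x ∈ I, u x ≠ 0)
    (hu : ∀ x ∈ I, HasDerivAt u (u₁ x) x) (hu₁ : ∀ x ∈ I, HasDerivAt u₁ (u₂ x) x)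
    (hY : ∀ x ∈ I, HasDerivAt Y (Y₁ x) x) (hY₁ : ∀ x ∈ I, HasDerivAt Y₁ (Y₂ x) x)
    {x : ℝ} (hx : x ∈ I) :
    deriv (deriv (liouvilleTransform h I Y)) (h x) =
      ((Y₂ x * u x - Y x * u₂ x) * u x - 3 * u₁ x * (Y₁ x * u x - Y x * u₁ x)) / u x ^ 5 := by
  have hcont : ContinuousOn u I := fun x hx => (hu x hx).continuousAt.continuousWithinAt
  have hZ : EqOn (liouvilleTransform h I Y ∘ h) (fun x => Y x / u x) I := fun x hx =>
    liouvilleTransform_apply hIc hh hu0 hx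
  have hZ' : EqOn (deriv (liouvilleTransform h I Y) ∘ h)
      (fun x => (Y₁ x * u x - Y x * u₁ x) / u x ^ 3) I := by
    intro x hx
    rw [comp_apply, (hasDerivAt_of_eqOn_comp hI hIc hh hcont hu0 hZ
      (fun x hx => (hY x hx).div (hu x hx) (hu0 x hx)) hx).deriv]
    field_simp [hu0 x hx]
  have hG : ∀ x ∈ I, HasDerivAt (fun x => (Y₁ x * u x - Y x * u₁ x) / u x ^ 3)
      (((Y₂ x * u x + Y₁ x * u₁ x - (Y₁ x * u₁ x + Y x * u₂ x)) * u x ^ 3 -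
        (Y₁ x * u x - Y x * u₁ x) * (3 * u x ^ 2 * u₁ x)) / (u x ^ 3) ^ 2) x := fun x hx =>
    (((hY₁ x hx).mul (hu x hx)).sub ((hY x hx).mul (hu₁ x hx))).div
      (((hu x hx).pow 3).congr_deriv (by norm_num)) (pow_ne_zero 3 (hu0 x hx))
  rw [(hasDerivAt_of_eqOn_comp hI hIc hh hcont hu0 hZ' hG hx).deriv]
  field_simp [hu0 x hx]
  ring

theorem deriv_deriv_liouvilleTransform_eq_mul (hI : IsOpen I) (hIc : I.OrdConnected)
    (hh : ∀ x ∈ I, HasDerivAt h (u x) x) (hu0 : ∀ x ∈ I, u x ≠ 0)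
    (hu : ∀ x ∈ I, HasDerivAt u (u₁ x) x) (hu₁ : ∀ x ∈ I, HasDerivAt u₁ (u₂ x) x)
    (hY : ∀ x ∈ I, HasDerivAt Y (Y₁ x) x) (hY₁ : ∀ x ∈ I, HasDerivAt Y₁ (Y₂ x) x) (p : ℝ)
    (hp : ∀ x ∈ I, (Y₂ x * u x - Y x * u₂ x) * u x - 3 * u₁ x * (Y₁ x * u x - Y x * u₁ x) =
      p * u x ^ 4 * Y x) :
    ∀ t ∈ h '' I,
      deriv (deriv (liouvilleTransform h I Y)) t = p * liouvilleTransform h I Y t := by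
  rintro _ ⟨x, hx, rfl⟩
  rw [deriv_deriv_liouvilleTransform hI hIc hh hu0 hu hu₁ hY hY₁ hx, hp x hx,
    liouvilleTransform_apply hIc hh hu0 hx]
  field_simp [hu0 x hx]

end LiouvilleTransform

lemma liouville_numerator_eq {u u₁ u₂ w₁ w₄₁ w₃₂ Y Y₁ Y₂ K : ℝ} (hu : u ≠ 0)
    (hu₁ : 3 * u ^ 2 * u₁ = w₁) (hu₂ : 3 * u ^ 2 * u₂ + 6 * u * u₁ ^ 2 = w₄₁ + w₃₂)
    (hY : Y₂ * u ^ 3 = w₁ * Y₁ - w₃₂ * Y)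
    (hK : (3 * w₄₁ + 12 * w₃₂) / u ^ 5 - 5 * w₁ ^ 2 / u ^ 8 = K) :
    (Y₂ * u - Y * u₂) * u - 3 * u₁ * (Y₁ * u - Y * u₁) = -K / 9 * u ^ 4 * Y := by
  subst hK hu₁
  obtain rfl : w₄₁ = 3 * u ^ 2 * u₂ + 6 * u * u₁ ^ 2 - w₃₂ := by linarith
  field_simp
  linear_combination 9 * hY

section Wronskian

variable {I : Set ℝ} {f g : ℝ → ℝ} {x : ℝ}

lemma Wdet_self (i : ℕ) : Wdet f g i i x = 0 := by
  rw [Wdet, mul_comm, sub_self]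

lemma hasDerivAt_Wdet {n i j : ℕ} (hI : IsOpen I) (hf : ContDiffOn ℝ n f I)
    (hg : ContDiffOn ℝ n g I) (hi : i < n) (hj : j < n) (hx : x ∈ I) :
    HasDerivAt (Wdet f g i j) (Wdet f g (i + 1) j x + Wdet f g i (j + 1) x) x :=
  (((hf.hasDerivAt_iteratedDeriv hI hi hx).mul (hg.hasDerivAt_iteratedDeriv hI hj hx)).sub
    ((hf.hasDerivAt_iteratedDeriv hI hj hx).mul (hg.hasDerivAt_iteratedDeriv hI hi hx))).congr_deriv
    (by simp only [Wdet]; ring)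

/-- Expansion of the determinant with rows `(F''', F'', F')`, `(f''', f'', f')`, `(g''', g'', g')`,
which vanishes because its first row repeats another. -/
lemma iteratedDeriv_three_mul_Wdet {F : ℝ → ℝ} (hF : F = f ∨ F = g) :
    iteratedDeriv 3 F x * Wdet f g 2 1 x =
      Wdet f g 3 1 x * iteratedDeriv 2 F x - Wdet f g 3 2 x * deriv F x := by
  rcases hF with rfl | rfl <;> simp only [Wdet, iteratedDeriv_one] <;> ring

lemma hasDerivAt_deriv_div_deriv (hf : HasDerivAt (deriv f) (iteratedDeriv 2 f x) x)
    (hg : HasDerivAt (deriv g) (iteratedDeriv 2 g x) x) (hg' : deriv g x ≠ 0) :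
    HasDerivAt (fun t => deriv f t / deriv g t) (Wdet f g 2 1 x / deriv g x ^ 2) x :=
  (hf.div hg hg').congr_deriv (by simp only [Wdet, iteratedDeriv_one])

theorem deriv_deriv_liouvilleTransform_deriv {h : ℝ → ℝ} (hI : IsOpen I)
    (hIc : I.OrdConnected) (hf : ContDiffOn ℝ 4 f I) (hg : ContDiffOn ℝ 4 g I)
    (hw : ∀ x ∈ I, Wdet f g 2 1 x ≠ 0) (hh : ∀ x ∈ I, HasDerivAt h (cbrt (Wdet f g 2 1 x)) x)
    {K : ℝ} (hK : ∀ x ∈ I,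
      (3 * Wdet f g 4 1 x + 12 * Wdet f g 3 2 x) / (cbrt (Wdet f g 2 1 x)) ^ 5 -
        5 * (Wdet f g 3 1 x) ^ 2 / (cbrt (Wdet f g 2 1 x)) ^ 8 = K)
    {F : ℝ → ℝ} (hF : F = f ∨ F = g) :
    ∀ t ∈ h '' I, deriv (deriv (liouvilleTransform h I (deriv F))) t =
      -K / 9 * liouvilleTransform h I (deriv F) t := by
  have hFC : ContDiffOn ℝ 4 F I := by rcases hF with rfl | rfl <;> assumption
  set u : ℝ → ℝ := fun x => cbrt (Wdet f g 2 1 x)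
  set u₁ : ℝ → ℝ := fun x => Wdet f g 3 1 x / (3 * u x ^ 2)
  have hu0 : ∀ x ∈ I, u x ≠ 0 := fun x hx => cbrt_ne_zero (hw x hx)
  have hu : ∀ x ∈ I, HasDerivAt u (u₁ x) x := fun x hx => by
    have hw' := hasDerivAt_Wdet hI hf hg (i := 2) (j := 1) (by norm_num) (by norm_num) hx
    rw [Wdet_self, add_zero] at hw'
    exact hw'.cbrt (hw x hx)
  have hu₁ : ∀ x ∈ I, HasDerivAt u₁ (((Wdet f g 4 1 x + Wdet f g 3 2 x) * (3 * u x ^ 2) -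
      Wdet f g 3 1 x * (3 * (2 * u x * u₁ x))) / (3 * u x ^ 2) ^ 2) x := fun x hx =>
    (hasDerivAt_Wdet hI hf hg (i := 3) (j := 1) (by norm_num) (by norm_num) hx).div
      ((((hu x hx).pow 2).congr_deriv (by norm_num)).const_mul 3)
      (by have := hu0 x hx; positivity)
  refine deriv_deriv_liouvilleTransform_eq_mul hI hIc hh hu0 hu hu₁
    (fun x hx => hFC.hasDerivAt_deriv hI (by norm_num) hx)
    (fun x hx => hFC.hasDerivAt_iteratedDeriv hI (by norm_num) hx) _ fun x hx => ?_
  have hu0x := hu0 x hx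
  refine liouville_numerator_eq hu0x ?_ ?_ ?_ (hK x hx) <;> simp only [u₁, u] at hu0x ⊢
  · field_simp
  · field_simp
    ring
  · rw [cbrt_pow_three, iteratedDeriv_three_mul_Wdet hF]

end Wronskian

theorem transformed_solves_Zpp_eq_pZ_general
    (I : Set ℝ) (hI : IsOpen I) (hIc : I.OrdConnected)
    (f g : ℝ → ℝ)
    (hf : ContDiffOn ℝ 4 f I) (hg : ContDiffOn ℝ 4 g I)
    (hg' : ∀ x ∈ I, deriv g x ≠ 0)
    (hphi' : ∀ x ∈ I, deriv (fun t => deriv f t / deriv g t) x ≠ 0)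
    (h : ℝ → ℝ) (hh : ∀ x ∈ I, HasDerivAt h (cbrt (Wdet f g 2 1 x)) x)
    (K : ℝ)
    (hconst : ∀ x ∈ I,
      (3 * Wdet f g 4 1 x + 12 * Wdet f g 3 2 x) / (cbrt (Wdet f g 2 1 x)) ^ 5 -
        5 * (Wdet f g 3 1 x) ^ 2 / (cbrt (Wdet f g 2 1 x)) ^ 8 = K) :
    ∃ p : ℝ, ∀ Y ∈ ({deriv f, deriv g} : Set (ℝ → ℝ)), ∀ t ∈ h '' I,
      deriv
        (deriv (fun s =>
          (1 / deriv h (Function.invFunOn h I s)) * Y (Function.invFunOn h I s))) t =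
      p * ((1 / deriv h (Function.invFunOn h I t)) * Y (Function.invFunOn h I t)) := by
  have hw : ∀ x ∈ I, Wdet f g 2 1 x ≠ 0 := fun x hx hw0 => hphi' x hx <| by
    rw [(hasDerivAt_deriv_div_deriv (hf.hasDerivAt_deriv hI (by norm_num) hx)
      (hg.hasDerivAt_deriv hI (by norm_num) hx) (hg' x hx)).deriv, hw0, zero_div]
  refine ⟨-K / 9, fun Y hY => ?_⟩
  rcases hY with rfl | rfl
  exacts [deriv_deriv_liouvilleTransform_deriv hI hIc hf hg hw hh hconst (Or.inl rfl),
    deriv_deriv_liouvilleTransform_deriv hI hIc hf hg hw hh hconst (Or.inr rfl)]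

/-- If the characteristic expression of a 𝒞₄ pair is constant, then the transformed
functions `Z = (1/(h'∘h⁻¹))·(Y∘h⁻¹)`, for `Y ∈ {f', g'}`, satisfy `Z'' = pZ` on `h(I)`,
where `h` is an antiderivative of the real cube root of `W^{2,1}_{f,g}`. -/
theorem transformed_solves_Zpp_eq_pZ
    (I : Set ℝ) (hI : IsOpen I) (hIc : I.OrdConnected) (hne : I.Nonempty)
    (f g : ℝ → ℝ)
    (hf : ContDiffOn ℝ 4 f I) (hg : ContDiffOn ℝ 4 g I)
    (hg' : ∀ x ∈ I, deriv g x ≠ 0)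
    (hphi' : ∀ x ∈ I, deriv (fun t => deriv f t / deriv g t) x ≠ 0)
    (h : ℝ → ℝ) (hh : ∀ x ∈ I, HasDerivAt h (cbrt (Wdet f g 2 1 x)) x)
    (K : ℝ)
    (hconst : ∀ x ∈ I,
      (3 * Wdet f g 4 1 x + 12 * Wdet f g 3 2 x) / (cbrt (Wdet f g 2 1 x)) ^ 5 -
        5 * (Wdet f g 3 1 x) ^ 2 / (cbrt (Wdet f g 2 1 x)) ^ 8 = K) :
    ∃ p : ℝ, ∀ Y ∈ ({deriv f, deriv g} : Set (ℝ → ℝ)), ∀ t ∈ h '' I,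
      deriv
        (deriv (fun s =>
          (1 / deriv h (Function.invFunOn h I s)) * Y (Function.invFunOn h I s))) t =
      p * ((1 / deriv h (Function.invFunOn h I t)) * Y (Function.invFunOn h I t)) :=
  transformed_solves_Zpp_eq_pZ_general I hI hIc f g hf hg hg' hphi' h hh K hconst
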